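/- arXiv:1801.02493 — 5 statements merged into one kernel-verified Lean document; each statement's English description precedes it below -/
import Mathlib

section
/- Let A, B, V be categories, L : A → B and R : B → A functors with L left adjoint to R, and H : Bᵒᵖ × A → V a functor. If the end ∫_{W ∈ B} H(R(W), W) exists, then the end ∫_{V ∈ A} H(V, L(V)) exists and is canonically isomorphic to it. -/
/-!
STATEMENT 0.
Let `A`, `B`, `V` be categories, `L : A ⥤ B`, `R : B ⥤ A` with `L ⊣ R`, and
`H : Aᵒᵖ × B ⥤ V` a functor (presented here in curried form `H : Aᵒᵖ ⥤ B ⥤ V`).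
If the end `∫_{W ∈ B} H(R W, W)` exists, then the end `∫_{V ∈ A} H(V, L V)` exists
and is canonically isomorphic to it (the canonical isomorphism being compatible with
the universal wedges via the counit of the adjunction).
-/

open CategoryTheory Opposite

universe v₁ v₂ v₃ u₁ u₂ u₃

variable {A : Type u₁} [Category.{v₁} A] {B : Type u₂} [Category.{v₂} B]
  {V : Type u₃} [Category.{v₃} V]

/-- A wedge over the diagram `a ↦ H (op a) (K a)`, i.e. a dinatural family
`pt ⟶ H(a, K a)`. -/
structure WedgeAlong (H : Aᵒᵖ ⥤ B ⥤ V) (K : A ⥤ B) where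
  pt : V
  leg : ∀ a : A, pt ⟶ (H.obj (op a)).obj (K.obj a)
  dinat : ∀ {a a' : A} (f : a ⟶ a'),
    leg a ≫ (H.obj (op a)).map (K.map f) = leg a' ≫ (H.map f.op).app (K.obj a')

/-- A wedge is an end when it is terminal among wedges. -/
def WedgeAlong.IsEnd {H : Aᵒᵖ ⥤ B ⥤ V} {K : A ⥤ B} (w : WedgeAlong H K) : Prop :=
  ∀ w' : WedgeAlong H K, ∃! φ : w'.pt ⟶ w.pt, ∀ a : A, φ ≫ w.leg a = w'.leg a

/-!
Whiskering with the unit, `a ↦ w_{L a} ≫ H(η_a, L a)`, turns a wedge over `b ↦ H(R b, b)` into a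
wedge over `a ↦ H(a, L a)` with the same apex; whiskering with the counit,
`b ↦ w_{R b} ≫ H(R b, ε_b)`, goes back. By dinaturality and the triangle identities the two
constructions are mutually inverse on legs, so the universal property of an end transfers, and the
identity of the apex is the comparison isomorphism.
-/

namespace WedgeAlong

variable {H : Aᵒᵖ ⥤ B ⥤ V} {L : A ⥤ B} {R : B ⥤ A} (adj : L ⊣ R)

def alongLeftAdjoint (w : WedgeAlong (R.op ⋙ H) (𝟭 B)) : WedgeAlong H L where
  pt := w.pt
  leg a := w.leg (L.obj a) ≫ (H.map (adj.unit.app a).op).app (L.obj a)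
  dinat {a a'} f := by
    have hdinat : w.leg (L.obj a) ≫ (H.obj (op (R.obj (L.obj a)))).map (L.map f) =
        w.leg (L.obj a') ≫ (H.map (R.map (L.map f)).op).app (L.obj a') := w.dinat (L.map f)
    -- `adj.unit.app a : (𝟭 A).obj a ⟶ (L ⋙ R).obj a` hides these in implicit arguments, where `rw`
    -- would not see through them.
    dsimp only [Functor.id_obj, Functor.comp_obj]
    rw [Category.assoc, ← NatTrans.naturality, reassoc_of% hdinat, ← NatTrans.comp_app,
      ← H.map_comp, ← op_comp, adj.unit_naturality f, op_comp, H.map_comp, NatTrans.comp_app,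
      Category.assoc]

def alongRightAdjoint (w : WedgeAlong H L) : WedgeAlong (R.op ⋙ H) (𝟭 B) where
  pt := w.pt
  leg b := w.leg (R.obj b) ≫ (H.obj (op (R.obj b))).map (adj.counit.app b)
  dinat {b b'} g := by
    have hdinat : w.leg (R.obj b) ≫ (H.obj (op (R.obj b))).map (L.map (R.map g)) =
        w.leg (R.obj b') ≫ (H.map (R.map g).op).app (L.obj (R.obj b')) := w.dinat (R.map g)
    dsimp only [Functor.id_obj, Functor.id_map, Functor.comp_map, Functor.op_map,
      Quiver.Hom.unop_op]
    rw [Category.assoc, ← Functor.map_comp, ← adj.counit_naturality g, Functor.map_comp,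
      reassoc_of% hdinat, Category.assoc, NatTrans.naturality]

theorem leg_map_unit_map_counit (w : WedgeAlong (R.op ⋙ H) (𝟭 B)) (b : B) :
    w.leg (L.obj (R.obj b)) ≫ (H.map (adj.unit.app (R.obj b)).op).app (L.obj (R.obj b)) ≫
      (H.obj (op (R.obj b))).map (adj.counit.app b) = w.leg b := by
  have hdinat : w.leg (L.obj (R.obj b)) ≫
      (H.obj (op (R.obj (L.obj (R.obj b))))).map (adj.counit.app b) =
        w.leg b ≫ (H.map (R.map (adj.counit.app b)).op).app b :=
    w.dinat (adj.counit.app b)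
  dsimp only [Functor.id_obj, Functor.comp_obj]
  rw [← NatTrans.naturality, reassoc_of% hdinat, ← NatTrans.comp_app, ← H.map_comp,
    ← op_comp, adj.right_triangle_components, op_id, H.map_id, NatTrans.id_app]
  exact Category.comp_id _

theorem leg_map_counit_map_unit (w : WedgeAlong H L) (a : A) :
    w.leg (R.obj (L.obj a)) ≫ (H.obj (op (R.obj (L.obj a)))).map (adj.counit.app (L.obj a)) ≫
      (H.map (adj.unit.app a).op).app (L.obj a) = w.leg a := by
  have hdinat : w.leg a ≫ (H.obj (op a)).map (L.map (adj.unit.app a)) =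
      w.leg (R.obj (L.obj a)) ≫ (H.map (adj.unit.app a).op).app (L.obj (R.obj (L.obj a))) :=
    w.dinat (adj.unit.app a)
  dsimp only [Functor.id_obj, Functor.comp_obj]
  rw [NatTrans.naturality, ← reassoc_of% hdinat, ← Functor.map_comp,
    adj.left_triangle_components, (H.obj (op a)).map_id]
  exact Category.comp_id _

theorem isEnd_alongLeftAdjoint {w : WedgeAlong (R.op ⋙ H) (𝟭 B)} (hw : w.IsEnd) :
    (alongLeftAdjoint adj w).IsEnd := by
  intro w'
  obtain ⟨φ, hφ, hφ_unique⟩ : ∃! φ : w'.pt ⟶ w.pt, ∀ b,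
      φ ≫ w.leg b = w'.leg (R.obj b) ≫ (H.obj (op (R.obj b))).map (adj.counit.app b) :=
    hw (alongRightAdjoint adj w')
  change ∃! φ : w'.pt ⟶ w.pt, ∀ a,
    φ ≫ w.leg (L.obj a) ≫ (H.map (adj.unit.app a).op).app (L.obj a) = w'.leg a
  refine ⟨φ, fun a => ?_, fun ψ hψ => hφ_unique ψ fun b => ?_⟩
  · rw [reassoc_of% hφ, w'.leg_map_counit_map_unit adj]
  · rw [← w.leg_map_unit_map_counit adj b, reassoc_of% (hψ (R.obj b))]

end WedgeAlong

theorem end_along_left_adjoint_of_end_along_right_adjoint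
    (L : A ⥤ B) (R : B ⥤ A) (adj : L ⊣ R) (H : Aᵒᵖ ⥤ B ⥤ V)
    (wB : WedgeAlong (R.op ⋙ H) (𝟭 B)) (hB : wB.IsEnd) :
    ∃ wA : WedgeAlong H L, wA.IsEnd ∧
      ∃ e : wA.pt ≅ wB.pt, ∀ b : B,
        e.hom ≫ wB.leg b =
          wA.leg (R.obj b) ≫ (H.obj (op (R.obj b))).map (adj.counit.app b) :=
  ⟨WedgeAlong.alongLeftAdjoint adj wB, WedgeAlong.isEnd_alongLeftAdjoint adj hB, Iso.refl _,
    fun b => (Category.id_comp _).trans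
      ((wB.leg_map_unit_map_counit adj b).symm.trans (Category.assoc _ _ _).symm)⟩
end

section
/- Let C be a monoidal category, A a Frobenius algebra in C with multiplication m, unit u, and right A-module isomorphism φ : A → A*, giving e_φ = ev_A ∘ (φ ⊗ id_A) and d_φ = (id_A ⊗ φ⁻¹) ∘ coev_A. Let J be an ideal of A with inclusion i : J → A. Then the Fourier-transform isomorphism Hom_C(A, 1) ≅ Hom_C(1, A), ξ ↦ (ξ ⊗ id_A) ∘ d_φ, restricts to an isomorphism between Hom_C(A/J, 1) = {ξ : A → 1 | ξ ∘ i = 0} and {a : 1 → A | m ∘ (a ⊗ i) = 0}. -/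
/-!
The pairing `e` and copairing `d` exhibit `A` as its own left dual, so `ξ ↦ (ξ ⊗ id) ∘ d` and
`a ↦ e ∘ (a ⊗ id)` are mutually inverse, and a morphism `g : X ⟶ A` is determined by
`e ∘ (g ⊗ id)`. Write `L_a = m ∘ (a ⊗ id)` for left multiplication by `a = Φ ξ`. The Frobenius
identity `e ∘ (m ⊗ id) = e ∘ (id ⊗ m)` gives `e ∘ (L_a ⊗ id) = ξ ∘ m` and `ξ = ε ∘ L_a` for the
counit `ε = e ∘ (id ⊗ u)`. Hence `ξ ∘ i = 0` forces `e ∘ ((L_a ∘ i) ⊗ id) = ξ ∘ m ∘ (i ⊗ id)`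
to vanish, because `m ∘ (i ⊗ id)` factors through `J`, and so `L_a ∘ i = 0`; conversely
`L_a ∘ i = 0` gives `ξ ∘ i = ε ∘ L_a ∘ i = 0`.
-/

open CategoryTheory MonoidalCategory Limits

universe v₁ u₁

section

variable {C : Type*} [Category C] [MonoidalCategory C]

section ZeroWhisker

variable [HasZeroMorphisms C]

/-- Without a preadditive tensor product, `0 ▷ Y` need not vanish; it does once composed into
the unit object. -/
lemma zero_toUnit_whiskerRight_comp {X Y : C} (v : 𝟙_ C ⊗ Y ⟶ 𝟙_ C) :
    ((0 : X ⟶ 𝟙_ C) ▷ Y) ≫ v = 0 := by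
  calc ((0 : X ⟶ 𝟙_ C) ▷ Y) ≫ v
      = ((0 : X ⟶ 𝟙_ C) ▷ Y) ≫ (𝟙_ C ◁ ((λ_ Y).inv ≫ v)) ≫ (λ_ (𝟙_ C)).hom := by
        rw [leftUnitor_naturality, Iso.hom_inv_id_assoc]
    _ = (X ◁ ((λ_ Y).inv ≫ v)) ≫ ((0 : X ⟶ 𝟙_ C) ▷ 𝟙_ C) ≫ (ρ_ (𝟙_ C)).hom := by
        rw [← whisker_exchange_assoc, unitors_equal]
    _ = 0 := by simp

lemma zero_whiskerRight_comp_toUnit {X Y Z : C} (f : Z ⊗ Y ⟶ 𝟙_ C) :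
    ((0 : X ⟶ Z) ▷ Y) ≫ f = 0 := by
  rw [← zero_comp (X := X) (Y := 𝟙_ C) (f := (0 : 𝟙_ C ⟶ Z)), comp_whiskerRight,
    Category.assoc, zero_toUnit_whiskerRight_comp]

end ZeroWhisker

namespace Frobenius

variable {A : C}

def fourier (d : 𝟙_ C ⟶ A ⊗ A) (ξ : A ⟶ 𝟙_ C) : 𝟙_ C ⟶ A :=
  d ≫ (ξ ▷ A) ≫ (λ_ A).hom

def fourierInv (e : A ⊗ A ⟶ 𝟙_ C) (a : 𝟙_ C ⟶ A) : A ⟶ 𝟙_ C :=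
  (λ_ A).inv ≫ (a ▷ A) ≫ e

def leftMul (m : A ⊗ A ⟶ A) (a : 𝟙_ C ⟶ A) : A ⟶ A :=
  (λ_ A).inv ≫ (a ▷ A) ≫ m

section Duality

variable {e : A ⊗ A ⟶ 𝟙_ C} {d : 𝟙_ C ⟶ A ⊗ A}

lemma fourierInv_fourier
    (h_zig₁ : (λ_ A).inv ≫ (d ▷ A) ≫ (α_ A A A).hom ≫ (A ◁ e) ≫ (ρ_ A).hom = 𝟙 A)
    (ξ : A ⟶ 𝟙_ C) : fourierInv e (fourier d ξ) = ξ := by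
  simp only [fourierInv, fourier, comp_whiskerRight, Category.assoc, leftUnitor_whiskerRight,
    associator_naturality_left_assoc]
  rw [← leftUnitor_naturality, ← whisker_exchange_assoc, whiskerRight_id]
  simp only [Category.assoc, unitors_equal, Iso.inv_hom_id, Category.comp_id]
  rw [reassoc_of% h_zig₁]

lemma copairing_comp_whiskerRight_pairing
    (h_zig₂ : (ρ_ A).inv ≫ (A ◁ d) ≫ (α_ A A A).inv ≫ (e ▷ A) ≫ (λ_ A).hom = 𝟙 A)
    {X : C} (g : X ⟶ A) :
    (ρ_ X).inv ≫ (X ◁ d) ≫ (α_ X A A).inv ≫ (((g ▷ A) ≫ e) ▷ A) ≫ (λ_ A).hom = g := by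
  rw [comp_whiskerRight, Category.assoc, ← associator_inv_naturality_left_assoc,
    whisker_exchange_assoc, whiskerRight_id]
  simp only [Category.assoc, Iso.inv_hom_id_assoc]
  rw [h_zig₂, Category.comp_id]

lemma fourier_fourierInv
    (h_zig₂ : (ρ_ A).inv ≫ (A ◁ d) ≫ (α_ A A A).inv ≫ (e ▷ A) ≫ (λ_ A).hom = 𝟙 A)
    (a : 𝟙_ C ⟶ A) : fourier d (fourierInv e a) = a := by
  conv_rhs => rw [← copairing_comp_whiskerRight_pairing h_zig₂ a]
  simp [fourier, fourierInv, unitors_equal]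

lemma eq_zero_of_whiskerRight_comp_pairing_eq_zero [HasZeroMorphisms C]
    (h_zig₂ : (ρ_ A).inv ≫ (A ◁ d) ≫ (α_ A A A).inv ≫ (e ▷ A) ≫ (λ_ A).hom = 𝟙 A)
    {X : C} {g : X ⟶ A} (hg : (g ▷ A) ≫ e = 0) : g = 0 := by
  rw [← copairing_comp_whiskerRight_pairing h_zig₂ g,
    ← copairing_comp_whiskerRight_pairing h_zig₂ (0 : X ⟶ A), hg,
    zero_whiskerRight_comp_toUnit]

end Duality

section FrobeniusIdentity

variable {m : A ⊗ A ⟶ A} {e : A ⊗ A ⟶ 𝟙_ C}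

lemma leftMul_whiskerRight_comp_pairing
    (h_frob₁ : (m ▷ A) ≫ e = (α_ A A A).hom ≫ (A ◁ m) ≫ e) (a : 𝟙_ C ⟶ A) :
    (leftMul m a ▷ A) ≫ e = m ≫ fourierInv e a := by
  rw [leftMul, fourierInv, comp_whiskerRight, comp_whiskerRight, Category.assoc, Category.assoc,
    h_frob₁, associator_naturality_left_assoc, ← whisker_exchange_assoc,
    ← leftUnitor_tensor_inv_assoc, ← leftUnitor_inv_naturality_assoc]

lemma mul_comp_counit {u : 𝟙_ C ⟶ A}
    (h_unit_r : (A ◁ u) ≫ m = (ρ_ A).hom)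
    (h_frob₁ : (m ▷ A) ≫ e = (α_ A A A).hom ≫ (A ◁ m) ≫ e) :
    m ≫ (ρ_ A).inv ≫ (A ◁ u) ≫ e = e := by
  rw [rightUnitor_inv_naturality_assoc, ← whisker_exchange_assoc, h_frob₁,
    associator_naturality_right_assoc, ← MonoidalCategory.whiskerLeft_comp_assoc, h_unit_r,
    ← rightUnitor_tensor_hom_assoc, Iso.inv_hom_id_assoc]

end FrobeniusIdentity

lemma comp_eq_zero_iff_comp_leftMul_fourier_eq_zero [HasZeroMorphisms C] {m : A ⊗ A ⟶ A}
    {u : 𝟙_ C ⟶ A} {e : A ⊗ A ⟶ 𝟙_ C} {d : 𝟙_ C ⟶ A ⊗ A}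
    (h_unit_r : (A ◁ u) ≫ m = (ρ_ A).hom)
    (h_zig₁ : (λ_ A).inv ≫ (d ▷ A) ≫ (α_ A A A).hom ≫ (A ◁ e) ≫ (ρ_ A).hom = 𝟙 A)
    (h_zig₂ : (ρ_ A).inv ≫ (A ◁ d) ≫ (α_ A A A).inv ≫ (e ▷ A) ≫ (λ_ A).hom = 𝟙 A)
    (h_frob₁ : (m ▷ A) ≫ e = (α_ A A A).hom ≫ (A ◁ m) ≫ e)
    {J : C} {i : J ⟶ A} {p : J ⊗ A ⟶ J} (hp : p ≫ i = (i ▷ A) ≫ m) (ξ : A ⟶ 𝟙_ C) :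
    i ≫ ξ = 0 ↔ i ≫ leftMul m (fourier d ξ) = 0 := by
  have hξ : ξ = leftMul m (fourier d ξ) ≫ (ρ_ A).inv ≫ (A ◁ u) ≫ e := by
    conv_lhs => rw [← fourierInv_fourier h_zig₁ ξ]
    simp only [leftMul, fourierInv, Category.assoc, mul_comp_counit h_unit_r h_frob₁]
  constructor
  · intro hiξ
    apply eq_zero_of_whiskerRight_comp_pairing_eq_zero h_zig₂
    rw [comp_whiskerRight, Category.assoc, leftMul_whiskerRight_comp_pairing h_frob₁,
      fourierInv_fourier h_zig₁, ← reassoc_of% hp, hiξ, comp_zero]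
  · intro hiL
    rw [hξ, reassoc_of% hiL, zero_comp]

end Frobenius

end

open Frobenius in
theorem frobenius_fourier_transform_restricts_general
    {C : Type u₁} [Category.{v₁} C] [MonoidalCategory C] [HasZeroMorphisms C]
    (A : C) (m : A ⊗ A ⟶ A) (u : 𝟙_ C ⟶ A)
    -- `A` is an algebra:
    (h_unit_r : (A ◁ u) ≫ m = (ρ_ A).hom)
    -- `(A, e, d)` is a left dual object of `A`:
    (e : A ⊗ A ⟶ 𝟙_ C) (d : 𝟙_ C ⟶ A ⊗ A)
    (h_zig₁ : (λ_ A).inv ≫ (d ▷ A) ≫ (α_ A A A).hom ≫ (A ◁ e) ≫ (ρ_ A).hom = 𝟙 A)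
    (h_zig₂ : (ρ_ A).inv ≫ (A ◁ d) ≫ (α_ A A A).inv ≫ (e ▷ A) ≫ (λ_ A).hom = 𝟙 A)
    -- the Frobenius identities coming from right `A`-linearity of `φ`:
    (h_frob₁ : (m ▷ A) ≫ e = (α_ A A A).hom ≫ (A ◁ m) ≫ e)
    -- `J` is an ideal of `A`:
    (J : C) (i : J ⟶ A)
    (h_ideal : ∃ p : J ⊗ A ⟶ J, p ≫ i = (i ▷ A) ≫ m) :
    -- the Fourier transform `Φ : Hom(A, 𝟙) → Hom(𝟙, A)` and its inverse `Ψ`: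
    let Φ : (A ⟶ 𝟙_ C) → (𝟙_ C ⟶ A) := fun ξ => d ≫ (ξ ▷ A) ≫ (λ_ A).hom
    let Ψ : (𝟙_ C ⟶ A) → (A ⟶ 𝟙_ C) := fun a => (λ_ A).inv ≫ (a ▷ A) ≫ e
    (∀ ξ : A ⟶ 𝟙_ C, Ψ (Φ ξ) = ξ) ∧ (∀ a : 𝟙_ C ⟶ A, Φ (Ψ a) = a) ∧
    Function.Bijective Φ ∧
    -- the restriction statement:
    (∀ ξ : A ⟶ 𝟙_ C,
      i ≫ ξ = 0 ↔ (λ_ J).inv ≫ (Φ ξ ▷ J) ≫ (A ◁ i) ≫ m = 0) := by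
  intro Φ Ψ
  have hΨΦ : ∀ ξ, Ψ (Φ ξ) = ξ := fourierInv_fourier h_zig₁
  have hΦΨ : ∀ a, Φ (Ψ a) = a := fourier_fourierInv h_zig₂
  refine ⟨hΨΦ, hΦΨ, Function.bijective_iff_has_inverse.mpr ⟨Ψ, hΨΦ, hΦΨ⟩, fun ξ => ?_⟩
  obtain ⟨p, hp⟩ := h_ideal
  rw [← whisker_exchange_assoc, ← leftUnitor_inv_naturality_assoc]
  exact comp_eq_zero_iff_comp_leftMul_fourier_eq_zero h_unit_r h_zig₁ h_zig₂ h_frob₁ hp ξ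

theorem frobenius_fourier_transform_restricts
    {C : Type u₁} [Category.{v₁} C] [MonoidalCategory C] [HasZeroMorphisms C]
    (A : C) (m : A ⊗ A ⟶ A) (u : 𝟙_ C ⟶ A)
    -- `A` is an algebra:
    (h_assoc : (α_ A A A).hom ≫ (A ◁ m) ≫ m = (m ▷ A) ≫ m)
    (h_unit_l : (u ▷ A) ≫ m = (λ_ A).hom)
    (h_unit_r : (A ◁ u) ≫ m = (ρ_ A).hom)
    -- `(A, e, d)` is a left dual object of `A`:
    (e : A ⊗ A ⟶ 𝟙_ C) (d : 𝟙_ C ⟶ A ⊗ A)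
    (h_zig₁ : (λ_ A).inv ≫ (d ▷ A) ≫ (α_ A A A).hom ≫ (A ◁ e) ≫ (ρ_ A).hom = 𝟙 A)
    (h_zig₂ : (ρ_ A).inv ≫ (A ◁ d) ≫ (α_ A A A).inv ≫ (e ▷ A) ≫ (λ_ A).hom = 𝟙 A)
    -- the Frobenius identities coming from right `A`-linearity of `φ`:
    (h_frob₁ : (m ▷ A) ≫ e = (α_ A A A).hom ≫ (A ◁ m) ≫ e)
    (h_frob₂ : (λ_ A).inv ≫ (d ▷ A) ≫ (α_ A A A).hom ≫ (A ◁ m) =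
      (ρ_ A).inv ≫ (A ◁ d) ≫ (α_ A A A).inv ≫ (m ▷ A))
    -- `J` is an ideal of `A`:
    (J : C) (i : J ⟶ A) (h_mono : Mono i)
    (h_ideal : ∃ p : J ⊗ A ⟶ J, p ≫ i = (i ▷ A) ≫ m) :
    -- the Fourier transform `Φ : Hom(A, 𝟙) → Hom(𝟙, A)` and its inverse `Ψ`:
    let Φ : (A ⟶ 𝟙_ C) → (𝟙_ C ⟶ A) := fun ξ => d ≫ (ξ ▷ A) ≫ (λ_ A).hom
    let Ψ : (𝟙_ C ⟶ A) → (A ⟶ 𝟙_ C) := fun a => (λ_ A).inv ≫ (a ▷ A) ≫ e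
    (∀ ξ : A ⟶ 𝟙_ C, Ψ (Φ ξ) = ξ) ∧ (∀ a : 𝟙_ C ⟶ A, Φ (Ψ a) = a) ∧
    Function.Bijective Φ ∧
    -- the restriction statement:
    (∀ ξ : A ⟶ 𝟙_ C,
      i ≫ ξ = 0 ↔ (λ_ J).inv ≫ (Φ ξ ▷ J) ≫ (A ◁ i) ≫ m = 0) :=
  frobenius_fourier_transform_restricts_general A m u h_unit_r e d h_zig₁ h_zig₂ h_frob₁ J i h_ideal
end

section
/- Let A be a finite-dimensional basic algebra over an algebraically closed field, and C = A* the corresponding pointed coalgebra with coradical filtration C₀ ⊆ C₁ ⊆ ⋯. Then Sym₂(A) := {f ∈ Sym(A) | f(J²) = 0} equals C₀ ⊕ ⨁_{g ∈ G(C)} P_{g,g}, where G(C) is the set of grouplike elements of C and P_{g,g} = {x ∈ C | Δ(x) = x ⊗ g + g ⊗ x} is the space of (g,g)-skew-primitive elements. -/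
/-!
STATEMENT 14.
Let `A` be a finite-dimensional basic algebra over an algebraically closed field `k`
(`basic` is encoded, equivalently over an algebraically closed field, by the
commutativity of `A/J`, i.e. `ab − ba ∈ J` for all `a b`), and let `C = A*` be the
corresponding pointed coalgebra with coradical filtration `C₀ ⊆ C₁ ⊆ ⋯`, so that
`Cₙ = (A/Jⁿ⁺¹)*` and the grouplike elements of `C` are the algebra maps `A → k`.
Then `Sym₂(A) = {f ∈ Sym(A) | f(J²) = 0}` equals `C₀ ⊕ ⨁_{g ∈ G(C)} P_{g,g}`, where
`P_{g,g} = {f | f(ab) = f(a)g(b) + g(a)f(b)}` is the space of `(g,g)`-skew-primitive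
elements of `C = A*`.
-/

open Module

section Defs

variable (k : Type) [Field k] (A : Type) [Ring A] [Algebra k A]

/-- The `n`-th power of the Jacobson radical of `A`. -/
def jacPow (n : ℕ) : Ideal A := ((⊥ : Ideal A).jacobson) ^ n

/-- The space `Sym(A)` of symmetric linear forms on `A`. -/
def SymSub : Submodule k (Module.Dual k A) where
  carrier := {f | ∀ a b : A, f (a * b) = f (b * a)}
  add_mem' := by intro f g hf hg a b; simp [hf a b, hg a b]
  zero_mem' := by intro a b; simp
  smul_mem' := by intro c f hf a b; simp [hf a b]

/-- The space of linear forms vanishing on `Jⁿ`; for `n = 1` this is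
`C₀ = (A/J)* ⊆ A*`, the coradical of the coalgebra `C = A*`. -/
def VanJ (n : ℕ) : Submodule k (Module.Dual k A) where
  carrier := {f | ∀ x ∈ jacPow A n, f x = 0}
  add_mem' := by intro f g hf hg x hx; simp [hf x hx, hg x hx]
  zero_mem' := by intro x hx; simp
  smul_mem' := by intro c f hf x hx; simp [hf x hx]

/-- For a grouplike element `g ∈ G(A*)`, i.e. an algebra map `g : A → k`, the space
`P_{g,g} = {f ∈ A* | f(ab) = f(a)g(b) + g(a)f(b)}` of `(g,g)`-skew-primitives. -/
def SkewPrim (g : A →ₐ[k] k) : Submodule k (Module.Dual k A) where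
  carrier := {f | ∀ a b : A, f (a * b) = f a * g b + g a * f b}
  add_mem' := by
    intro f f' hf hf' a b
    simp only [LinearMap.add_apply, hf a b, hf' a b, add_mul, mul_add]
    ring
  zero_mem' := by intro a b; simp
  smul_mem' := by
    intro c f hf a b
    simp only [LinearMap.smul_apply, smul_eq_mul, hf a b, mul_add]
    ring

end Defs

/-!
Since `A` is basic and `k` is algebraically closed, `A/J ≅ k^G(C)`; lifting the standard
idempotents along the nilpotent ideal `J` gives a complete system of orthogonal idempotents `e_g`
with `h(e_g) = δ_{gh}`, so that `e_g b ≡ g(b) e_g ≡ b e_g` modulo `J`. For `f ∈ Sym₂(A)`, the forms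
`F_g(b) = f(e_g b e_g) - f(e_g) g(b)` are `(g,g)`-skew-primitive because `f` kills `J²`, and
`f - ∑ F_g` kills `J` because symmetry gives `f(x) = ∑ f(e_g x e_g)`.
For independence, evaluating `f₀ + ∑ F_g = 0` at `e_h x` with `x ∈ J` shows that `F_h` kills `J`,
and a `(g,g)`-skew-primitive `F` killing `J` is zero: `F(e_g) = 0` and `F(b) = F(e_g b)`.
-/

theorem iSupIndep_of_sum_eq_zero {ι R N : Type*} [Fintype ι] [Ring R] [AddCommGroup N]
    [Module R N] (p : ι → Submodule R N)
    (h : ∀ v : ι → N, (∀ i, v i ∈ p i) → ∑ i, v i = 0 → ∀ i, v i = 0) : iSupIndep p := by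
  classical
  rw [iSupIndep_iff_finsetSum_eq_zero_imp_eq_zero]
  intro s v hv hsum i hi
  have hmem j : (if j ∈ s then v j else 0) ∈ p j := by
    split_ifs with hj
    exacts [hv j hj, zero_mem _]
  simpa [hi] using h _ hmem (by rw [Finset.sum_ite_mem, Finset.univ_inter, hsum]) i

section

variable {k : Type} [Field k] {A : Type} [Ring A] [Algebra k A]

theorem mem_vanJ_one_iff {f : Module.Dual k A} :
    f ∈ VanJ k A 1 ↔ ∀ x ∈ (⊥ : Ideal A).jacobson, f x = 0 := by
  change (∀ x ∈ jacPow A 1, f x = 0) ↔ _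
  rw [jacPow, Submodule.pow_one]

theorem mem_vanJ_two_iff {f : Module.Dual k A} :
    f ∈ VanJ k A 2 ↔ ∀ x ∈ (⊥ : Ideal A).jacobson * (⊥ : Ideal A).jacobson, f x = 0 := by
  change (∀ x ∈ jacPow A 2, f x = 0) ↔ _
  rw [jacPow, Submodule.pow_succ, Submodule.pow_one]

theorem vanJ_mono {m n : ℕ} (h : m ≤ n) : VanJ k A m ≤ VanJ k A n :=
  fun _ hf x hx => hf x (Ideal.pow_le_pow_right h hx)

theorem AlgHom.map_eq_zero_of_mem_jacobson_bot (g : A →ₐ[k] k) {x : A}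
    (hx : x ∈ (⊥ : Ideal A).jacobson) : g x = 0 :=
  Ideal.mem_sInf.1 hx ⟨bot_le, RingHom.ker_isMaximal_of_surjective g
    fun c => ⟨algebraMap k A c, g.commutes c⟩⟩

theorem vanJ_one_le_symSub (hbasic : ∀ a b : A, a * b - b * a ∈ (⊥ : Ideal A).jacobson) :
    VanJ k A 1 ≤ SymSub k A := fun f hf a b =>
  sub_eq_zero.1 (by rw [← map_sub]; exact mem_vanJ_one_iff.1 hf _ (hbasic a b))

theorem skewPrim_le_symSub (g : A →ₐ[k] k) : SkewPrim k A g ≤ SymSub k A := fun f hf a b => by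
  rw [hf a b, hf b a]; ring

theorem skewPrim_le_vanJ_two (g : A →ₐ[k] k) : SkewPrim k A g ≤ VanJ k A 2 :=
  fun f hf => mem_vanJ_two_iff.2 fun _ hx => Submodule.mul_induction_on hx
    (fun a ha b hb => by
      rw [hf, g.map_eq_zero_of_mem_jacobson_bot ha, g.map_eq_zero_of_mem_jacobson_bot hb]; ring)
    (fun _ _ hx hy => by rw [map_add, hx, hy, add_zero])

def skewPart (f : Module.Dual k A) (e : A) (g : A →ₐ[k] k) : Module.Dual k A :=
  f ∘ₗ LinearMap.mulLeft k e ∘ₗ LinearMap.mulRight k e - f e • g.toLinearMap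

@[simp]
theorem skewPart_apply (f : Module.Dual k A) (e : A) (g : A →ₐ[k] k) (b : A) :
    skewPart f e g b = f (e * (b * e)) - f e * g b := rfl

theorem skewPart_mem_skewPrim {I : Ideal A} {f : Module.Dual k A} {e : A} {g : A →ₐ[k] k}
    (he : IsIdempotentElem e) (hl : ∀ b, e * b - g b • e ∈ I) (hr : ∀ b, b * e - g b • e ∈ I)
    (hf : ∀ x ∈ I * I, f x = 0) : skewPart f e g ∈ SkewPrim k A g := by
  intro b c
  have hb : (e * b - g b • e) * e = e * (b * e) - g b • e := by
    rw [sub_mul, smul_mul_assoc, he.eq, mul_assoc]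
  have hc : e * (c * e - g c • e) = e * (c * e) - g c • e := by
    rw [mul_sub, mul_smul_comm, he.eq]
  have key : e * (b * c * e) = (e * b - g b • e) * (c * e - g c • e)
      + g c • ((e * b - g b • e) * e) + g b • (e * (c * e - g c • e)) + (g b * g c) • e := by
    simp only [sub_mul, mul_sub, smul_mul_assoc, mul_smul_comm, smul_sub, he.eq, mul_assoc,
      smul_smul]
    module
  have hbc := hf _ (Ideal.mul_mem_mul (hl b) (hr c))
  simp only [skewPart_apply, key, map_add, map_smul, hbc, hb, hc, map_sub, map_mul, smul_eq_mul]
  ring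

theorem eq_zero_of_mem_skewPrim_of_forall_mem_eq_zero {I : Ideal A} {F : Module.Dual k A} {e : A}
    {g : A →ₐ[k] k} (hF : F ∈ SkewPrim k A g) (he : IsIdempotentElem e) (hge : g e = 1)
    (hl : ∀ b, e * b - g b • e ∈ I) (hFI : ∀ x ∈ I, F x = 0) : F = 0 := by
  have hFe : F e = 0 := by
    have := hF e e
    rw [he.eq, hge] at this
    linear_combination -this
  ext b
  have := hFI _ (hl b)
  rw [map_sub, map_smul, hF, hFe, hge] at this
  simpa using this

theorem CompleteOrthogonalIdempotents.apply_eq_sum_of_mem_symSub {ι : Type*} [Fintype ι]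
    {e : ι → A} (he : CompleteOrthogonalIdempotents e) {f : Module.Dual k A}
    (hf : f ∈ SymSub k A) (x : A) : f x = ∑ i, f (e i * (x * e i)) :=
  calc f x = f (x * ∑ i, e i) := by rw [he.complete, mul_one]
    _ = ∑ i, f (x * e i * e i) := by simp only [Finset.mul_sum, map_sum, mul_assoc, (he.idem _).eq]
    _ = ∑ i, f (e i * (x * e i)) := by simp only [hf _ (e _)]

theorem surjective_pi_algHom [_root_.Finite (A →ₐ[k] k)] :
    Function.Surjective (AlgHom.pi fun g : A →ₐ[k] k => g) := by
  have hli : LinearIndependent k fun g : A →ₐ[k] k => (g : A → k) :=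
    (linearIndependent_monoidHom A k).comp (fun g : A →ₐ[k] k => (g : A →* k))
      fun _ _ h => AlgHom.ext fun x => DFunLike.congr_fun h x
  change Function.Surjective (AlgHom.pi fun g : A →ₐ[k] k => g).toLinearMap
  rw [← LinearMap.range_eq_top, ← span_flip_eq_top_iff_linearIndependent.2 hli,
    ← Submodule.span_eq (LinearMap.range _), LinearMap.coe_range]
  rfl

variable [IsAlgClosed k] [FiniteDimensional k A]

theorem exists_algHom_ker_le (hbasic : ∀ a b : A, a * b - b * a ∈ (⊥ : Ideal A).jacobson)
    (m : Ideal A) [hm : m.IsMaximal] : ∃ g : A →ₐ[k] k, RingHom.ker g ≤ m := by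
  have : IsSimpleModule A (A ⧸ m) := isSimpleModule_iff_isCoatom.2 hm.out
  have hJ : ∀ z ∈ (⊥ : Ideal A).jacobson, ∀ v : A ⧸ m, z • v = 0 := by
    intro z hz v
    induction v using Submodule.Quotient.induction_on with | H y =>
    rw [← Submodule.Quotient.mk_smul, Submodule.Quotient.mk_eq_zero]
    have hzy : z * y ∈ (⊥ : Ideal A).jacobson := Ideal.mul_mem_right y _ hz
    exact Ideal.mem_sInf.1 hzy ⟨bot_le, hm⟩
  -- `J` kills `A ⧸ m` and contains all commutators, so `A` acts on `A ⧸ m` by `A`-linear maps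
  let ρ : A →ₐ[k] Module.End A (A ⧸ m) :=
    { toFun b :=
        { toFun v := b • v
          map_add' := smul_add b
          map_smul' r v := by
            have := hJ _ (hbasic b r) v
            rwa [sub_smul, sub_eq_zero, mul_smul, mul_smul] at this }
      map_one' := LinearMap.ext (one_smul A)
      map_mul' a b := LinearMap.ext (mul_smul a b)
      map_zero' := LinearMap.ext (zero_smul A)
      map_add' a b := LinearMap.ext (add_smul a b)
      commutes' c := LinearMap.ext fun v => algebraMap_smul A c v }
  let χ := AlgEquiv.ofBijective (Algebra.ofId k _)
    (IsSimpleModule.algebraMap_end_bijective_of_isAlgClosed k (A := A) (V := A ⧸ m))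
  refine ⟨χ.symm.toAlgHom.comp ρ, fun x hx => ?_⟩
  have hρ : ρ x = 0 := by simpa using hx
  have : x • Submodule.Quotient.mk 1 = (0 : A ⧸ m) := LinearMap.congr_fun hρ _
  rwa [← Submodule.Quotient.mk_smul, smul_eq_mul, mul_one, Submodule.Quotient.mk_eq_zero] at this

theorem mem_jacobson_bot_iff_forall_algHom
    (hbasic : ∀ a b : A, a * b - b * a ∈ (⊥ : Ideal A).jacobson) {x : A} :
    x ∈ (⊥ : Ideal A).jacobson ↔ ∀ g : A →ₐ[k] k, g x = 0 := by
  refine ⟨fun hx g => g.map_eq_zero_of_mem_jacobson_bot hx, fun hx => Ideal.mem_sInf.2 ?_⟩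
  rintro m ⟨-, hm⟩
  obtain ⟨g, hg⟩ := exists_algHom_ker_le (k := k) hbasic m
  exact hg (hx g)

theorem exists_completeOrthogonalIdempotents [Fintype (A →ₐ[k] k)]
    (hbasic : ∀ a b : A, a * b - b * a ∈ (⊥ : Ideal A).jacobson) :
    ∃ e : (A →ₐ[k] k) → A, CompleteOrthogonalIdempotents e ∧
      (∀ g : A →ₐ[k] k, g (e g) = 1) ∧ ∀ g h : A →ₐ[k] k, h ≠ g → h (e g) = 0 := by
  classical
  have : IsArtinianRing A := IsArtinianRing.of_finite k A
  have hnil : ∀ x ∈ RingHom.ker (AlgHom.pi fun g : A →ₐ[k] k => g), IsNilpotent x := by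
    intro x hx
    have hxJ : x ∈ (⊥ : Ideal A).jacobson :=
      (mem_jacobson_bot_iff_forall_algHom hbasic).2 fun g => congr_fun hx g
    obtain ⟨n, hn⟩ := IsArtinianRing.isNilpotent_jacobson_bot (R := A)
    exact ⟨n, by simpa [hn] using Ideal.pow_mem_pow hxJ n⟩
  obtain ⟨e, he, hχe⟩ := CompleteOrthogonalIdempotents.lift_of_isNilpotent_ker _ hnil
    (.single fun _ : A →ₐ[k] k => k) fun _ => surjective_pi_algHom _
  have hχ (g h : A →ₐ[k] k) : h (e g) = Pi.single (M := fun _ => k) g 1 h :=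
    congr_fun (congr_fun hχe g) h
  exact ⟨e, he, fun g => by simp [hχ], fun g h hne => by simp [hχ, hne]⟩

theorem mul_sub_smul_mem_jacobson_bot
    (hbasic : ∀ a b : A, a * b - b * a ∈ (⊥ : Ideal A).jacobson) {e : A} {g : A →ₐ[k] k}
    (hge : g e = 1) (he : ∀ h : A →ₐ[k] k, h ≠ g → h e = 0) (b : A) :
    e * b - g b • e ∈ (⊥ : Ideal A).jacobson ∧ b * e - g b • e ∈ (⊥ : Ideal A).jacobson := by
  simp only [mem_jacobson_bot_iff_forall_algHom (k := k) hbasic, map_sub, map_mul, map_smul,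
    smul_eq_mul]
  constructor <;> intro h <;> rcases eq_or_ne h g with rfl | hg <;> simp [*]

theorem mem_vanJ_one_sup_iSup_skewPrim
    (hbasic : ∀ a b : A, a * b - b * a ∈ (⊥ : Ideal A).jacobson) {f : Module.Dual k A}
    (hf : f ∈ SymSub k A ⊓ VanJ k A 2) : f ∈ VanJ k A 1 ⊔ ⨆ g : A →ₐ[k] k, SkewPrim k A g := by
  have := Fintype.ofFinite (A →ₐ[k] k)
  obtain ⟨e, he, he₁, he₀⟩ := exists_completeOrthogonalIdempotents (k := k) hbasic
  have hJ g := mul_sub_smul_mem_jacobson_bot hbasic (he₁ g) (he₀ g)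
  rw [← sub_add_cancel f (∑ g, skewPart f (e g) g)]
  refine Submodule.add_mem_sup (mem_vanJ_one_iff.2 fun x hx => ?_)
    (Submodule.sum_mem _ fun g _ => Submodule.mem_iSup_of_mem g ?_)
  · simp [AlgHom.map_eq_zero_of_mem_jacobson_bot _ hx, ← he.apply_eq_sum_of_mem_symSub hf.1]
  · exact skewPart_mem_skewPrim (he.idem g) (fun b => (hJ g b).1) (fun b => (hJ g b).2)
      (mem_vanJ_two_iff.1 hf.2)

theorem skewPrim_eq_zero_of_add_sum_eq_zero [Fintype (A →ₐ[k] k)]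
    (hbasic : ∀ a b : A, a * b - b * a ∈ (⊥ : Ideal A).jacobson) {f₀ : Module.Dual k A}
    (hf₀ : f₀ ∈ VanJ k A 1) {F : (A →ₐ[k] k) → Module.Dual k A}
    (hF : ∀ g, F g ∈ SkewPrim k A g) (hsum : f₀ + ∑ g, F g = 0) (h : A →ₐ[k] k) : F h = 0 := by
  obtain ⟨e, he, he₁, he₀⟩ := exists_completeOrthogonalIdempotents (k := k) hbasic
  refine eq_zero_of_mem_skewPrim_of_forall_mem_eq_zero (hF h) (he.idem h) (he₁ h)
    (fun b => (mul_sub_smul_mem_jacobson_bot hbasic (he₁ h) (he₀ h) b).1) fun x hx => ?_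
  have hg : ∀ g, g ≠ h → F g (e h * x) = 0 := fun g hgh => by
    rw [hF g, g.map_eq_zero_of_mem_jacobson_bot hx, he₀ h g hgh]; ring
  calc F h x = F h (e h * x) := by rw [hF h, h.map_eq_zero_of_mem_jacobson_bot hx, he₁]; ring
    _ = f₀ (e h * x) + ∑ g, F g (e h * x) := by
      rw [mem_vanJ_one_iff.1 hf₀ _ (Ideal.mul_mem_left _ _ hx), zero_add,
        Finset.sum_eq_single h (fun g _ => hg g) (by simp)]
    _ = 0 := by simpa using LinearMap.congr_fun hsum (e h * x)

end

theorem sym_two_eq_coradical_sup_skew_primitives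
    (k : Type) [Field k] [IsAlgClosed k]
    (A : Type) [Ring A] [Algebra k A] [FiniteDimensional k A]
    -- `A` is basic:
    (hbasic : ∀ a b : A, a * b - b * a ∈ (⊥ : Ideal A).jacobson) :
    (SymSub k A ⊓ VanJ k A 2 =
      VanJ k A 1 ⊔ ⨆ g : A →ₐ[k] k, SkewPrim k A g) ∧
    iSupIndep (fun o : Option (A →ₐ[k] k) =>
      o.elim (VanJ k A 1) (fun g => SkewPrim k A g)) := by
  have := Fintype.ofFinite (A →ₐ[k] k)
  refine ⟨le_antisymm (fun f hf => mem_vanJ_one_sup_iSup_skewPrim hbasic hf)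
    (sup_le (le_inf (vanJ_one_le_symSub hbasic) (vanJ_mono one_le_two))
      (iSup_le fun g => le_inf (skewPrim_le_symSub g) (skewPrim_le_vanJ_two g))), ?_⟩
  refine iSupIndep_of_sum_eq_zero _ fun v hv hsum => ?_
  rw [Fintype.sum_option] at hsum
  have hF := skewPrim_eq_zero_of_add_sum_eq_zero hbasic (hv none) (fun g => hv (some g)) hsum
  rintro (_ | g)
  · simpa [hF] using hsum
  · exact hF g
end

section
/- Let A be a finite-dimensional symmetric Frobenius algebra over a field k with an A-bimodule isomorphism λ : A → A*. Then for every positive integer n, the map z ↦ λ ∘ z (composition with the central element regarded as a bimodule endomorphism of A) restricts to an isomorphism between the n-th Reynolds ideal Rey_n(A) = {z ∈ Z(A) | rz = 0 for all r ∈ J^n} and Sym_n(A) = {f ∈ Sym(A) | f(J^n) = 0}, where J is the Jacobson radical. -/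
/-!
A bimodule map `l : A → A*` satisfies `l (z a) = l z (a ·)` and `l (a z) = l z (· a)`.
Hence `l z` is symmetric iff `l (z a) = l (a z)` for all `a`, and `l z` kills a left ideal `I`
iff `l (r z) = 0` for all `r ∈ I`. For injective `l` these say that `z` is central and that
`I z = 0`, so `Rey_n(A)` is exactly the preimage of `Sym_n(A)` under `l`.
-/

open Module

section Defs

variable (k : Type) [Field k] (A : Type) [Ring A] [Algebra k A]

/-- The `n`-th Reynolds ideal `Rey_n(A) = {z ∈ Z(A) | rz = 0 for all r ∈ Jⁿ}`. -/
def ReyN (n : ℕ) : Set A :=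
  {z | (∀ a : A, a * z = z * a) ∧ ∀ r ∈ jacPow A n, r * z = 0}

/-- `Sym_n(A) = {f ∈ A* | f(ab) = f(ba), f(Jⁿ) = 0}`. -/
def SymNSet (n : ℕ) : Set (Module.Dual k A) :=
  {f | (∀ a b : A, f (a * b) = f (b * a)) ∧ ∀ x ∈ jacPow A n, f x = 0}

end Defs

namespace BimoduleDual

variable {k A : Type*} [CommSemiring k] [Ring A] [Algebra k A] {l : A →ₗ[k] Dual k A}

theorem apply_mul_right (hl : ∀ a x b y : A, l (a * x * b) y = l x (b * y * a)) (z a y : A) :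
    l (z * a) y = l z (a * y) := by
  simpa using hl 1 z a y

theorem apply_mul_left (hl : ∀ a x b y : A, l (a * x * b) y = l x (b * y * a)) (z a y : A) :
    l (a * z) y = l z (y * a) := by
  simpa using hl a z 1 y

theorem isSymmetric_apply_iff_commute (hl : ∀ a x b y : A, l (a * x * b) y = l x (b * y * a))
    (hinj : Function.Injective l) (z : A) :
    (∀ a b : A, l z (a * b) = l z (b * a)) ↔ ∀ a : A, a * z = z * a := by
  constructor
  · intro hsym a
    apply hinj
    ext y
    rw [apply_mul_left hl, apply_mul_right hl, hsym y a]
  · intro hcomm a b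
    rw [← apply_mul_right hl, ← hcomm a, apply_mul_left hl]

theorem apply_eq_zero_on_iff_mul_eq_zero (hl : ∀ a x b y : A, l (a * x * b) y = l x (b * y * a))
    (hinj : Function.Injective l) (I : Ideal A) (z : A) :
    (∀ x ∈ I, l z x = 0) ↔ ∀ r ∈ I, r * z = 0 := by
  constructor
  · intro hvan r hr
    apply hinj
    ext y
    rw [apply_mul_left hl, map_zero, LinearMap.zero_apply]
    exact hvan (y * r) (I.mul_mem_left y hr)
  · intro hann x hx
    simpa [hann x hx] using (apply_mul_left hl z x 1).symm

end BimoduleDual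

theorem mem_reyN_iff_apply_mem_symNSet {k A : Type} [Field k] [Ring A] [Algebra k A]
    {l : A →ₗ[k] Dual k A} (hl : ∀ a x b y : A, l (a * x * b) y = l x (b * y * a))
    (hinj : Function.Injective l) (n : ℕ) (z : A) :
    z ∈ ReyN A n ↔ l z ∈ SymNSet k A n :=
  and_congr (BimoduleDual.isSymmetric_apply_iff_commute hl hinj z).symm
    (BimoduleDual.apply_eq_zero_on_iff_mul_eq_zero hl hinj _ z).symm

theorem reynolds_ideal_bijects_onto_symmetric_forms_general
    (k : Type) [Field k]
    (A : Type) [Ring A] [Algebra k A]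
    -- `A` is symmetric Frobenius, via an `A`-bimodule isomorphism `l : A ≃ A*`:
    (l : A ≃ₗ[k] Module.Dual k A)
    (hl : ∀ a x b y : A, l (a * x * b) y = l x (b * y * a)) :
    ∀ n : ℕ, 0 < n →
      Set.BijOn (fun z : A => (l z : Module.Dual k A))
        (ReyN A n) (SymNSet k A n) := by
  intro n _
  have hRey : ReyN A n = l ⁻¹' SymNSet k A n :=
    Set.ext (mem_reyN_iff_apply_mem_symNSet (l := l.toLinearMap) hl l.injective n)
  rw [hRey]
  exact l.bijective.bijOn_preimage

theorem reynolds_ideal_bijects_onto_symmetric_forms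
    (k : Type) [Field k]
    (A : Type) [Ring A] [Algebra k A] [FiniteDimensional k A]
    -- `A` is symmetric Frobenius, via an `A`-bimodule isomorphism `l : A ≃ A*`:
    (l : A ≃ₗ[k] Module.Dual k A)
    (hl : ∀ a x b y : A, l (a * x * b) y = l x (b * y * a)) :
    ∀ n : ℕ, 0 < n →
      Set.BijOn (fun z : A => (l z : Module.Dual k A))
        (ReyN A n) (SymNSet k A n) :=
  reynolds_ideal_bijects_onto_symmetric_forms_general k A l hl
end

section
/- Let A and B be abelian categories, ⟨−,−⟩ : Aᵒᵖ × A → B a functor that is additive and exact in each variable, X, Y objects of B, and d(M) : X → ⟨M,M⟩, e(M) : ⟨M,M⟩ → Y dinatural transformations. For an endomorphism f : M → M set t(f) = e(M) ∘ ⟨id_M, f⟩ ∘ d(M). If 0 → M₁ →^r M₂ →^s M₃ → 0 is a short exact sequence and f₁, f₂, f₃ are endomorphisms of M₁, M₂, M₃ with f₂ r = r f₁ and s f₂ = f₃ s, then t(f₂) = t(f₁) + t(f₃). -/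
/-!
Let `K` be the kernel of `⟨r, s⟩ : ⟨M₂, M₂⟩ ⟶ ⟨M₁, M₃⟩`. Left exactness of `⟨M₁, −⟩` and
`⟨−, M₃⟩` yields projections `p₁ : K ⟶ ⟨M₁, M₁⟩` and `p₃ : K ⟶ ⟨M₃, M₃⟩`. By exactness of
`⟨M₂, −⟩` the image of `⟨id, r⟩` is the kernel of `p₃`, and `⟨s, id⟩` followed by `p₃` is the
epimorphism `⟨id, s⟩`, so `K = Im ⟨id, r⟩ + Im ⟨s, id⟩`. Dinaturality of `e` gives
`e(M₂) = e(M₁) p₁ + e(M₃) p₃` on both images, hence on `K`. Dinaturality of `d` together with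
`f₂ r = r f₁` and `s f₂ = f₃ s` shows that `⟨id, f₂⟩ d(M₂)` factors through `K`, with
projections `⟨id, f₁⟩ d(M₁)` and `⟨id, f₃⟩ d(M₃)`.
-/

open CategoryTheory Opposite Limits

universe v₁ v₂ u₁ u₂

open scoped Pseudoelement
open CategoryTheory.Abelian.Pseudoelement

namespace CategoryTheory.ShortComplex

variable {C : Type*} [Category C] [Abelian C]

theorem Exact.eq_zero_of_comp_eq_zero {S : ShortComplex C} (hS : S.Exact) {Q Y : C}
    (b : Q ⟶ S.X₂) [Epi (b ≫ S.g)] {ε : S.X₂ ⟶ Y} (hf : S.f ≫ ε = 0) (hb : b ≫ ε = 0) :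
    ε = 0 := by
  obtain ⟨ε', rfl⟩ : ∃ ε', cokernel.π S.f ≫ ε' = ε :=
    ⟨cokernel.desc _ ε hf, cokernel.π_desc _ _ _⟩
  -- `cokernel.desc S.f S.g` is mono by exactness and epi because `b ≫ S.g` is, so it is an
  -- iso and `b ≫ cokernel.π S.f` is epi.
  have := hS.mono_cokernelDesc
  have : Epi (cokernel.desc S.f S.g S.zero) :=
    epi_of_epi_fac (f := b ≫ cokernel.π S.f) (by rw [Category.assoc, cokernel.π_desc])
  have : IsIso (cokernel.desc S.f S.g S.zero) := isIso_of_mono_of_epi _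
  have hfac : (b ≫ S.g) ≫ inv (cokernel.desc S.f S.g S.zero) = b ≫ cokernel.π S.f := by
    rw [IsIso.comp_inv_eq, Category.assoc, cokernel.π_desc]
  have : Epi (b ≫ cokernel.π S.f) := hfac ▸ inferInstance
  have hε' : ε' = 0 :=
    (cancel_epi (b ≫ cokernel.π S.f)).1 (by rw [Category.assoc, hb, comp_zero])
  rw [hε', comp_zero]

theorem exact_of_hom_of_epi_of_mono {S T : ShortComplex C} (hT : T.Exact) (φ : S ⟶ T)
    [Epi φ.τ₁] [Mono φ.τ₂] : S.Exact := by
  refine exact_of_pseudo_exact S fun z hz => ?_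
  have : T.g (φ.τ₂ z) = 0 := by
    rw [← Abelian.Pseudoelement.comp_apply, φ.comm₂₃, Abelian.Pseudoelement.comp_apply, hz,
      apply_zero]
  obtain ⟨w, hw⟩ := pseudo_exact_of_exact hT _ this
  obtain ⟨w', rfl⟩ := pseudo_surjective_of_epi φ.τ₁ w
  refine ⟨w', pseudo_injective_of_mono φ.τ₂ ?_⟩
  rw [← Abelian.Pseudoelement.comp_apply, ← φ.comm₁₂, Abelian.Pseudoelement.comp_apply, hw]

end CategoryTheory.ShortComplex

namespace CategoryTheory.Bifunctor

variable {A B : Type*} [Category A] [Category B] (H : Aᵒᵖ ⥤ A ⥤ B)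

theorem dinatural_comp_map_comp_app_of_comm {X : B} (d : ∀ m : A, X ⟶ (H.obj (op m)).obj m)
    (hd : ∀ {m n : A} (u : m ⟶ n), d m ≫ (H.obj (op m)).map u = d n ≫ (H.map u.op).app n)
    {m n : A} (u : m ⟶ n) {f : m ⟶ m} {g : n ⟶ n} (hfg : u ≫ g = f ≫ u) :
    (d n ≫ (H.obj (op n)).map g) ≫ (H.map u.op).app n =
      (d m ≫ (H.obj (op m)).map f) ≫ (H.obj (op m)).map u := calc
  _ = (d n ≫ (H.map u.op).app n) ≫ (H.obj (op m)).map g := by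
        rw [Category.assoc, Category.assoc, (H.map u.op).naturality]
  _ = d m ≫ (H.obj (op m)).map (u ≫ g) := by rw [← hd, Category.assoc, Functor.map_comp]
  _ = (d m ≫ (H.obj (op m)).map f) ≫ (H.obj (op m)).map u := by
        rw [hfg, Functor.map_comp, Category.assoc]

instance mono_map_op_app [∀ n : A, PreservesFiniteLimits (H.flip.obj n)] {M N : A}
    (s : M ⟶ N) [Epi s] (n : A) : Mono ((H.map s.op).app n) :=
  inferInstanceAs (Mono ((H.flip.obj n).map s.op))

variable [Abelian A] [Abelian B] (S : ShortComplex A)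

theorem map_f_comp_map_g [∀ m : A, (H.obj (op m)).PreservesZeroMorphisms] (m : A) :
    (H.obj (op m)).map S.f ≫ (H.obj (op m)).map S.g = 0 :=
  (S.map (H.obj (op m))).zero

theorem map_g_op_app_comp_map_f_op_app [∀ n : A, (H.flip.obj n).PreservesZeroMorphisms]
    (n : A) : (H.map S.g.op).app n ≫ (H.map S.f.op).app n = 0 :=
  (S.op.map (H.flip.obj n)).zero

/-- The map `⟨S.f, S.g⟩ : ⟨X₂, X₂⟩ ⟶ ⟨X₁, X₃⟩`, writing `⟨u, v⟩` for
`(H.map u.op).app _ ≫ (H.obj _).map v`. -/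
noncomputable def crossMap : (H.obj (op S.X₂)).obj S.X₂ ⟶ (H.obj (op S.X₁)).obj S.X₃ :=
  (H.map S.f.op).app S.X₂ ≫ (H.obj (op S.X₁)).map S.g

noncomputable def crossKernelIn₁ [∀ m : A, (H.obj (op m)).PreservesZeroMorphisms] :
    (H.obj (op S.X₂)).obj S.X₁ ⟶ kernel (crossMap H S) :=
  kernel.lift _ ((H.obj (op S.X₂)).map S.f) (by
    rw [crossMap, ← Category.assoc, (H.map S.f.op).naturality, Category.assoc,
      map_f_comp_map_g, comp_zero])

noncomputable def crossKernelIn₃ [∀ n : A, (H.flip.obj n).PreservesZeroMorphisms] :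
    (H.obj (op S.X₃)).obj S.X₂ ⟶ kernel (crossMap H S) :=
  kernel.lift _ ((H.map S.g.op).app S.X₂) (by
    rw [crossMap, ← Category.assoc, map_g_op_app_comp_map_f_op_app, zero_comp])

theorem crossKernelIn₁_ι [∀ m : A, (H.obj (op m)).PreservesZeroMorphisms] :
    crossKernelIn₁ H S ≫ kernel.ι (crossMap H S) = (H.obj (op S.X₂)).map S.f :=
  kernel.lift_ι _ _ _

theorem crossKernelIn₃_ι [∀ n : A, (H.flip.obj n).PreservesZeroMorphisms] :
    crossKernelIn₃ H S ≫ kernel.ι (crossMap H S) = (H.map S.g.op).app S.X₂ :=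
  kernel.lift_ι _ _ _

variable {S}

theorem exact_map_obj [∀ m : A, PreservesFiniteLimits (H.obj (op m))] (hS : S.ShortExact)
    (m : A) : (ShortComplex.mk _ _ (map_f_comp_map_g H S m)).Exact :=
  hS.exact.map_of_mono_of_preservesKernel _ hS.mono_f inferInstance

theorem exact_map_op_app [∀ n : A, PreservesFiniteLimits (H.flip.obj n)] (hS : S.ShortExact)
    (n : A) : (ShortComplex.mk _ _ (map_g_op_app_comp_map_f_op_app H S n)).Exact :=
  have := hS.epi_g
  hS.exact.op.map_of_mono_of_preservesKernel (H.flip.obj n) (inferInstanceAs (Mono S.g.op))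
    inferInstance

noncomputable def crossKernelProj₁ [∀ m : A, PreservesFiniteLimits (H.obj (op m))]
    (hS : S.ShortExact) : kernel (crossMap H S) ⟶ (H.obj (op S.X₁)).obj S.X₁ :=
  have := hS.mono_f
  (exact_map_obj H hS S.X₁).lift (kernel.ι _ ≫ (H.map S.f.op).app S.X₂)
    ((Category.assoc _ _ _).trans (kernel.condition _))

noncomputable def crossKernelProj₃ [∀ n : A, PreservesFiniteLimits (H.flip.obj n)]
    (hS : S.ShortExact) : kernel (crossMap H S) ⟶ (H.obj (op S.X₃)).obj S.X₃ :=
  have := hS.epi_g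
  (exact_map_op_app H hS S.X₃).lift (kernel.ι _ ≫ (H.obj (op S.X₂)).map S.g) (by
    rw [Category.assoc, (H.map S.f.op).naturality]
    exact kernel.condition (crossMap H S))

theorem crossKernelProj₁_comp [∀ m : A, PreservesFiniteLimits (H.obj (op m))]
    (hS : S.ShortExact) :
    crossKernelProj₁ H hS ≫ (H.obj (op S.X₁)).map S.f =
      kernel.ι (crossMap H S) ≫ (H.map S.f.op).app S.X₂ :=
  have := hS.mono_f
  ShortComplex.Exact.lift_f _ _ _

theorem crossKernelProj₃_comp [∀ n : A, PreservesFiniteLimits (H.flip.obj n)]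
    (hS : S.ShortExact) :
    crossKernelProj₃ H hS ≫ (H.map S.g.op).app S.X₃ =
      kernel.ι (crossMap H S) ≫ (H.obj (op S.X₂)).map S.g :=
  have := hS.epi_g
  ShortComplex.Exact.lift_f _ _ _

theorem crossKernelIn₁_proj₁ [∀ m : A, PreservesFiniteLimits (H.obj (op m))]
    (hS : S.ShortExact) :
    crossKernelIn₁ H S ≫ crossKernelProj₁ H hS = (H.map S.f.op).app S.X₁ := by
  have := hS.mono_f
  rw [← cancel_mono ((H.obj (op S.X₁)).map S.f), Category.assoc, crossKernelProj₁_comp,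
    ← Category.assoc, crossKernelIn₁_ι, (H.map S.f.op).naturality]

theorem crossKernelIn₁_proj₃ [∀ m : A, (H.obj (op m)).PreservesZeroMorphisms]
    [∀ n : A, PreservesFiniteLimits (H.flip.obj n)] (hS : S.ShortExact) :
    crossKernelIn₁ H S ≫ crossKernelProj₃ H hS = 0 := by
  have := hS.epi_g
  rw [← cancel_mono ((H.map S.g.op).app S.X₃), Category.assoc, crossKernelProj₃_comp,
    ← Category.assoc, crossKernelIn₁_ι, map_f_comp_map_g, zero_comp]

theorem crossKernelIn₃_proj₁ [∀ n : A, (H.flip.obj n).PreservesZeroMorphisms]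
    [∀ m : A, PreservesFiniteLimits (H.obj (op m))] (hS : S.ShortExact) :
    crossKernelIn₃ H S ≫ crossKernelProj₁ H hS = 0 := by
  have := hS.mono_f
  rw [← cancel_mono ((H.obj (op S.X₁)).map S.f), Category.assoc, crossKernelProj₁_comp,
    ← Category.assoc, crossKernelIn₃_ι, map_g_op_app_comp_map_f_op_app, zero_comp]

theorem crossKernelIn₃_proj₃ [∀ n : A, PreservesFiniteLimits (H.flip.obj n)]
    (hS : S.ShortExact) :
    crossKernelIn₃ H S ≫ crossKernelProj₃ H hS = (H.obj (op S.X₃)).map S.g := by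
  have := hS.epi_g
  rw [← cancel_mono ((H.map S.g.op).app S.X₃), Category.assoc, crossKernelProj₃_comp,
    ← Category.assoc, crossKernelIn₃_ι, (H.map S.g.op).naturality]

theorem exact_crossKernelIn₁_proj₃ [∀ m : A, PreservesFiniteLimits (H.obj (op m))]
    [∀ n : A, PreservesFiniteLimits (H.flip.obj n)] (hS : S.ShortExact) :
    (ShortComplex.mk _ _ (crossKernelIn₁_proj₃ H hS)).Exact :=
  ShortComplex.exact_of_hom_of_epi_of_mono (exact_map_obj H hS S.X₂)
    { τ₁ := 𝟙 _
      τ₂ := kernel.ι (crossMap H S)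
      τ₃ := (H.map S.g.op).app S.X₃
      comm₁₂ := by rw [Category.id_comp]; exact (crossKernelIn₁_ι H S).symm
      comm₂₃ := (crossKernelProj₃_comp H hS).symm }

section Dinatural

variable [∀ m : A, PreservesFiniteLimits (H.obj (op m))]
  [∀ n : A, PreservesFiniteLimits (H.flip.obj n)]
  [∀ m : A, PreservesFiniteColimits (H.obj (op m))]

theorem kernel_ι_comp_eq_add (hS : S.ShortExact) {Y : B} (e : ∀ m : A, (H.obj (op m)).obj m ⟶ Y)
    (he : ∀ {m n : A} (u : m ⟶ n), (H.obj (op n)).map u ≫ e n = (H.map u.op).app m ≫ e m) :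
    kernel.ι (crossMap H S) ≫ e S.X₂ =
      crossKernelProj₁ H hS ≫ e S.X₁ + crossKernelProj₃ H hS ≫ e S.X₃ := by
  have := hS.epi_g
  have : Epi (crossKernelIn₃ H S ≫ crossKernelProj₃ H hS) := by
    rw [crossKernelIn₃_proj₃]; infer_instance
  rw [← sub_eq_zero]
  refine (exact_crossKernelIn₁_proj₃ H hS).eq_zero_of_comp_eq_zero (crossKernelIn₃ H S) ?_ ?_
  · simp only [Preadditive.comp_sub, Preadditive.comp_add, ← Category.assoc, crossKernelIn₁_ι,
      crossKernelIn₁_proj₁, crossKernelIn₁_proj₃, zero_comp, add_zero, he S.f, sub_self]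
  · simp only [Preadditive.comp_sub, Preadditive.comp_add, ← Category.assoc, crossKernelIn₃_ι,
      crossKernelIn₃_proj₁, crossKernelIn₃_proj₃, zero_comp, zero_add, he S.g, sub_self]

theorem comp_eq_add_of_comp_eq (hS : S.ShortExact) {Y : B} (e : ∀ m : A, (H.obj (op m)).obj m ⟶ Y)
    (he : ∀ {m n : A} (u : m ⟶ n), (H.obj (op n)).map u ≫ e n = (H.map u.op).app m ≫ e m)
    {T : B} {x : T ⟶ (H.obj (op S.X₂)).obj S.X₂}
    {x₁ : T ⟶ (H.obj (op S.X₁)).obj S.X₁} {x₃ : T ⟶ (H.obj (op S.X₃)).obj S.X₃}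
    (h₁ : x ≫ (H.map S.f.op).app S.X₂ = x₁ ≫ (H.obj (op S.X₁)).map S.f)
    (h₃ : x ≫ (H.obj (op S.X₂)).map S.g = x₃ ≫ (H.map S.g.op).app S.X₃) :
    x ≫ e S.X₂ = x₁ ≫ e S.X₁ + x₃ ≫ e S.X₃ := by
  have := hS.mono_f
  have := hS.epi_g
  have hx : x ≫ crossMap H S = 0 := by
    rw [crossMap, ← Category.assoc, h₁, Category.assoc, map_f_comp_map_g, comp_zero]
  have hx₁ : kernel.lift _ x hx ≫ crossKernelProj₁ H hS = x₁ := by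
    rw [← cancel_mono ((H.obj (op S.X₁)).map S.f), Category.assoc, crossKernelProj₁_comp,
      kernel.lift_ι_assoc, h₁]
  have hx₃ : kernel.lift _ x hx ≫ crossKernelProj₃ H hS = x₃ := by
    rw [← cancel_mono ((H.map S.g.op).app S.X₃), Category.assoc, crossKernelProj₃_comp,
      kernel.lift_ι_assoc, h₃]
  rw [← kernel.lift_ι _ x hx, Category.assoc, kernel_ι_comp_eq_add H hS e he,
    Preadditive.comp_add, ← Category.assoc, hx₁, ← Category.assoc, hx₃]

end Dinatural

end CategoryTheory.Bifunctor

open CategoryTheory.Bifunctor in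
theorem trace_like_additive_on_short_exact_sequences_general
    {A : Type u₁} [Category.{v₁} A] [Abelian A]
    {B : Type u₂} [Category.{v₂} B] [Abelian B]
    (H : Aᵒᵖ ⥤ A ⥤ B)
    -- additivity and exactness in each variable:
    (hex₂ : ∀ m : A,
      Nonempty (PreservesFiniteLimits (H.obj (op m))) ∧
      Nonempty (PreservesFiniteColimits (H.obj (op m))))
    (hex₁ : ∀ n : A,
      Nonempty (PreservesFiniteLimits (H.flip.obj n)) ∧
      Nonempty (PreservesFiniteColimits (H.flip.obj n)))
    (X Y : B)
    -- dinatural families `d` and `e`: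
    (d : ∀ m : A, X ⟶ (H.obj (op m)).obj m)
    (hd : ∀ {m n : A} (u : m ⟶ n),
      d m ≫ (H.obj (op m)).map u = d n ≫ (H.map u.op).app n)
    (e : ∀ m : A, (H.obj (op m)).obj m ⟶ Y)
    (he : ∀ {m n : A} (u : m ⟶ n),
      (H.obj (op n)).map u ≫ e n = (H.map u.op).app m ≫ e m)
    -- a short exact sequence `0 ⟶ M₁ ⟶ M₂ ⟶ M₃ ⟶ 0`:
    {M₁ M₂ M₃ : A} (r : M₁ ⟶ M₂) (s : M₂ ⟶ M₃)
    (hmono : Mono r) (hepi : Epi s) (hrs : r ≫ s = 0)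
    (hexact : (ShortComplex.mk r s hrs).Exact)
    -- compatible endomorphisms:
    (f₁ : M₁ ⟶ M₁) (f₂ : M₂ ⟶ M₂) (f₃ : M₃ ⟶ M₃)
    (hcomm₁ : r ≫ f₂ = f₁ ≫ r) (hcomm₂ : f₂ ≫ s = s ≫ f₃) :
    d M₂ ≫ (H.obj (op M₂)).map f₂ ≫ e M₂ =
      d M₁ ≫ (H.obj (op M₁)).map f₁ ≫ e M₁ +
        d M₃ ≫ (H.obj (op M₃)).map f₃ ≫ e M₃ := by
  have := fun m => (hex₂ m).1.some
  have := fun m => (hex₂ m).2.some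
  have := fun n => (hex₁ n).1.some
  have hS : (ShortComplex.mk r s hrs).ShortExact := { exact := hexact }
  simpa only [Category.assoc] using comp_eq_add_of_comp_eq H hS e he
    (dinatural_comp_map_comp_app_of_comm H d hd r hcomm₁)
    (dinatural_comp_map_comp_app_of_comm H d hd s hcomm₂.symm).symm

theorem trace_like_additive_on_short_exact_sequences
    {A : Type u₁} [Category.{v₁} A] [Abelian A]
    {B : Type u₂} [Category.{v₂} B] [Abelian B]
    (H : Aᵒᵖ ⥤ A ⥤ B)
    -- additivity and exactness in each variable:
    (hadd₂ : ∀ m : A, (H.obj (op m)).Additive)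
    (hadd₁ : ∀ n : A, (H.flip.obj n).Additive)
    (hex₂ : ∀ m : A,
      Nonempty (PreservesFiniteLimits (H.obj (op m))) ∧
      Nonempty (PreservesFiniteColimits (H.obj (op m))))
    (hex₁ : ∀ n : A,
      Nonempty (PreservesFiniteLimits (H.flip.obj n)) ∧
      Nonempty (PreservesFiniteColimits (H.flip.obj n)))
    (X Y : B)
    -- dinatural families `d` and `e`:
    (d : ∀ m : A, X ⟶ (H.obj (op m)).obj m)
    (hd : ∀ {m n : A} (u : m ⟶ n),
      d m ≫ (H.obj (op m)).map u = d n ≫ (H.map u.op).app n)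
    (e : ∀ m : A, (H.obj (op m)).obj m ⟶ Y)
    (he : ∀ {m n : A} (u : m ⟶ n),
      (H.obj (op n)).map u ≫ e n = (H.map u.op).app m ≫ e m)
    -- a short exact sequence `0 ⟶ M₁ ⟶ M₂ ⟶ M₃ ⟶ 0`:
    {M₁ M₂ M₃ : A} (r : M₁ ⟶ M₂) (s : M₂ ⟶ M₃)
    (hmono : Mono r) (hepi : Epi s) (hrs : r ≫ s = 0)
    (hexact : (ShortComplex.mk r s hrs).Exact)
    -- compatible endomorphisms:
    (f₁ : M₁ ⟶ M₁) (f₂ : M₂ ⟶ M₂) (f₃ : M₃ ⟶ M₃)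
    (hcomm₁ : r ≫ f₂ = f₁ ≫ r) (hcomm₂ : f₂ ≫ s = s ≫ f₃) :
    d M₂ ≫ (H.obj (op M₂)).map f₂ ≫ e M₂ =
      d M₁ ≫ (H.obj (op M₁)).map f₁ ≫ e M₁ +
        d M₃ ≫ (H.obj (op M₃)).map f₃ ≫ e M₃ :=
  trace_like_additive_on_short_exact_sequences_general H hex₂ hex₁ X Y d hd e he r s hmono hepi hrs
    hexact f₁ f₂ f₃ hcomm₁ hcomm₂
end
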